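/- Fix an odd integer m ≥ 1 and consider the (2+m)-dimensional vector space with even basis {e₁, e₂} and odd basis {y₁,…,y_m}, equipped with the bracket [y_i, e₁] = y_{i+1} for 1 ≤ i ≤ m-1, [y_{m+1-i}, y_i] = (-1)^{i+1} e₂ for 1 ≤ i ≤ (m+1)/2, extended by graded antisymmetry ([e₁, y_i] = -y_{i+1}, [y_i, y_{m+1-i}] = -(-1)^{i+1} e₂ when i ≠ m+1-i), and all other products of basis elements zero. Then this bracket satisfies the Jacobi superidentity, i.e., N_{2,m} is a Lie superalgebra. -/

import Mathlib

/-!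
The super Jacobiator is trilinear and invariant under rotating its arguments together with their
degrees, so it suffices to check it on generators of degree patterns `000`, `001`, `011`, `111`.
As `e₂` is central and `[y_j, y_k]` is a multiple of `e₂`, only `(e₁, e₁, y_k)` and
`(e₁, y_j, y_k)` need work.
The first vanishes because `[e₁, y] = -[y, e₁]`; the second says that the shift `y_k ↦ y_{k+1}` is
skew for the form `(y_j, y_k) ↦ [y_j, y_k]`, which holds because `m` is odd: the two signs
`(-1)^(k+1)` and `(-1)^(j+1)` that occur when `j + k + 2 = m` are opposite.
-/

open Submodule

section Jacobiator

variable {R M : Type*} [CommRing R] [AddCommGroup M] [Module R M] (br : M →ₗ[R] M →ₗ[R] M)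

def jacobiator (s₁ s₂ s₃ : R) (x y z : M) : M :=
  s₁ • br x (br y z) + s₂ • br y (br z x) + s₃ • br z (br x y)

theorem jacobiator_rotate (s₁ s₂ s₃ : R) (x y z : M) :
    jacobiator br s₁ s₂ s₃ x y z = jacobiator br s₂ s₃ s₁ y z x := by
  simp only [jacobiator]
  abel

theorem jacobiator_eq_zero_of_mem_span_left {s₁ s₂ s₃ : R} {A : Set M} {x y z : M}
    (h : ∀ a ∈ A, jacobiator br s₁ s₂ s₃ a y z = 0) (hx : x ∈ span R A) :
    jacobiator br s₁ s₂ s₃ x y z = 0 :=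
  LinearMap.eqOn_span' (f := s₁ • br.flip (br y z) + s₂ • (br y ∘ₗ br z) + s₃ • (br z ∘ₗ br.flip y))
    (g := 0) h hx

theorem jacobiator_eq_zero_of_mem_span {s₁ s₂ s₃ : R} {A B C : Set M}
    (h : ∀ a ∈ A, ∀ b ∈ B, ∀ c ∈ C, jacobiator br s₁ s₂ s₃ a b c = 0)
    {x y z : M} (hx : x ∈ span R A) (hy : y ∈ span R B) (hz : z ∈ span R C) :
    jacobiator br s₁ s₂ s₃ x y z = 0 := by
  refine jacobiator_eq_zero_of_mem_span_left br (fun a ha => ?_) hx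
  rw [jacobiator_rotate]
  refine jacobiator_eq_zero_of_mem_span_left br (fun b hb => ?_) hy
  rw [jacobiator_rotate]
  refine jacobiator_eq_zero_of_mem_span_left br (fun c hc => ?_) hz
  rw [jacobiator_rotate]
  exact h a ha b hb c hc

def superJacobiator (α β γ : ZMod 2) : M → M → M → M :=
  jacobiator br ((-1) ^ (α.val * γ.val)) ((-1) ^ (α.val * β.val)) ((-1) ^ (β.val * γ.val))

theorem superJacobiator_rotate (α β γ : ZMod 2) (x y z : M) :
    superJacobiator br α β γ x y z = superJacobiator br β γ α y z x := by
  rw [superJacobiator, jacobiator_rotate, superJacobiator, mul_comm α.val β.val,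
    mul_comm α.val γ.val]

theorem superJacobiator_eq_zero_of_mem_span (A : ZMod 2 → Set M)
    (h₀₀₀ : ∀ a ∈ A 0, ∀ b ∈ A 0, ∀ c ∈ A 0, jacobiator br 1 1 1 a b c = 0)
    (h₀₀₁ : ∀ a ∈ A 0, ∀ b ∈ A 0, ∀ c ∈ A 1, jacobiator br 1 1 1 a b c = 0)
    (h₀₁₁ : ∀ a ∈ A 0, ∀ b ∈ A 1, ∀ c ∈ A 1, jacobiator br 1 1 (-1) a b c = 0)
    (h₁₁₁ : ∀ a ∈ A 1, ∀ b ∈ A 1, ∀ c ∈ A 1, jacobiator br (-1) (-1) (-1) a b c = 0)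
    (α β γ : ZMod 2) {x y z : M} (hx : x ∈ span R (A α)) (hy : y ∈ span R (A β))
    (hz : z ∈ span R (A γ)) :
    superJacobiator br α β γ x y z = 0 := by
  suffices h : ∀ α β γ : ZMod 2, ∀ a ∈ A α, ∀ b ∈ A β, ∀ c ∈ A γ,
      superJacobiator br α β γ a b c = 0 from
    jacobiator_eq_zero_of_mem_span br (h α β γ) hx hy hz
  have val_one : (1 : ZMod 2).val = 1 := rfl
  have zero_or_one : ∀ δ : ZMod 2, δ = 0 ∨ δ = 1 := by decide
  intro α β γ
  rcases zero_or_one α with rfl | rfl <;> rcases zero_or_one β with rfl | rfl <;>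
    rcases zero_or_one γ with rfl | rfl <;> intro a ha b hb c hc
  · simpa [superJacobiator] using h₀₀₀ a ha b hb c hc
  · simpa [superJacobiator] using h₀₀₁ a ha b hb c hc
  · rw [superJacobiator_rotate, superJacobiator_rotate]
    simpa [superJacobiator, val_one] using h₀₀₁ c hc a ha b hb
  · simpa [superJacobiator, val_one] using h₀₁₁ a ha b hb c hc
  · rw [superJacobiator_rotate]
    simpa [superJacobiator, val_one] using h₀₀₁ b hb c hc a ha
  · rw [superJacobiator_rotate]
    simpa [superJacobiator, val_one] using h₀₁₁ b hb c hc a ha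
  · rw [superJacobiator_rotate, superJacobiator_rotate]
    simpa [superJacobiator, val_one] using h₀₁₁ c hc a ha b hb
  · simpa [superJacobiator, val_one] using h₁₁₁ a ha b hb c hc

end Jacobiator

/-- The bracket of `N_{2,m}`, with the odd basis indexed from `0`: `y k` is the paper's `y_{k+1}`,
so its sign `(-1)^(i+1)` in `[y_{m+1-i}, y_i]` becomes `(-1)^k` in `[y j, y k]`. -/
structure IsN2mBracket {R V : Type*} [CommRing R] [AddCommGroup V] [Module R V]
    (br : V →ₗ[R] V →ₗ[R] V) (m : ℕ) (e₁ e₂ : V) (y : ℕ → V) : Prop where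
  e₂_left : ∀ v, br e₂ v = 0
  e₂_right : ∀ v, br v e₂ = 0
  e₁_e₁ : br e₁ e₁ = 0
  e₁_y : ∀ k, br e₁ (y k) = -y (k + 1)
  y_e₁ : ∀ k, br (y k) e₁ = y (k + 1)
  y_y : ∀ j k, br (y j) (y k) = if j + k + 1 = m then (-1 : R) ^ k • e₂ else 0

namespace IsN2mBracket

variable {R V : Type*} [CommRing R] [AddCommGroup V] [Module R V] {br : V →ₗ[R] V →ₗ[R] V}
  {m : ℕ} {e₁ e₂ : V} {y : ℕ → V}

theorem br_br_y_y (h : IsN2mBracket br m e₁ e₂ y) (v : V) (j k : ℕ) :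
    br v (br (y j) (y k)) = 0 := by
  rw [h.y_y]
  split_ifs <;> simp [h.e₂_right]

theorem br_y_succ_add_br_y_succ (h : IsN2mBracket br m e₁ e₂ y) (hm : Odd m) (j k : ℕ) :
    br (y j) (y (k + 1)) + br (y k) (y (j + 1)) = 0 := by
  rw [h.y_y, h.y_y]
  by_cases hjk : j + k + 2 = m
  · rw [if_pos (by omega), if_pos (by omega), ← add_smul, neg_one_pow_eq_pow_mod_two (k + 1),
      neg_one_pow_eq_pow_mod_two (j + 1)]
    have hm2 := Nat.odd_iff.mp hm
    obtain ⟨hk, hj⟩ | ⟨hk, hj⟩ :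
        (k + 1) % 2 = 0 ∧ (j + 1) % 2 = 1 ∨ (k + 1) % 2 = 1 ∧ (j + 1) % 2 = 0 := by omega
    all_goals simp [hk, hj]
  · rw [if_neg (by omega), if_neg (by omega), add_zero]

theorem jacobiator_e₁_e₁_y (h : IsN2mBracket br m e₁ e₂ y) (k : ℕ) :
    jacobiator br 1 1 1 e₁ e₁ (y k) = 0 := by
  simp [jacobiator, h.e₁_y, h.y_e₁, h.e₁_e₁]

theorem jacobiator_e₁_y_y (h : IsN2mBracket br m e₁ e₂ y) (hm : Odd m) (j k : ℕ) :
    jacobiator br 1 1 (-1) e₁ (y j) (y k) = 0 := by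
  simpa [jacobiator, h.br_br_y_y, h.y_e₁, h.e₁_y] using h.br_y_succ_add_br_y_succ hm j k

theorem superJacobiator_eq_zero (h : IsN2mBracket br m e₁ e₂ y) (hm : Odd m)
    (α β γ : ZMod 2) {x x' x'' : V}
    (hx : x ∈ span R (![{e₁, e₂}, Set.range y] α))
    (hx' : x' ∈ span R (![{e₁, e₂}, Set.range y] β))
    (hx'' : x'' ∈ span R (![{e₁, e₂}, Set.range y] γ)) :
    superJacobiator br α β γ x x' x'' = 0 := by
  refine superJacobiator_eq_zero_of_mem_span br _ ?_ ?_ ?_ ?_ α β γ hx hx' hx''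
  · rintro a (rfl | rfl) b (rfl | rfl) c (rfl | rfl) <;>
      simp [jacobiator, h.e₂_left, h.e₂_right, h.e₁_e₁]
  · rintro a (rfl | rfl) b (rfl | rfl) c ⟨k, rfl⟩
    · exact h.jacobiator_e₁_e₁_y k
    all_goals simp [jacobiator, h.e₂_left, h.e₂_right]
  · rintro a (rfl | rfl) b ⟨j, rfl⟩ c ⟨k, rfl⟩
    · exact h.jacobiator_e₁_y_y hm j k
    · simp [jacobiator, h.e₂_left, h.e₂_right]
  · rintro a ⟨i, rfl⟩ b ⟨j, rfl⟩ c ⟨k, rfl⟩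
    simp [jacobiator, h.br_br_y_y]

theorem of_basis (bas : Module.Basis (Fin 2 ⊕ Fin m) R V) {eN yN : ℕ → V}
    (hE : ∀ i : Fin 2, bas (.inl i) = eN (i + 1)) (hY : ∀ j : Fin m, bas (.inr j) = yN (j + 1))
    (hyN0 : ∀ k, ¬(1 ≤ k ∧ k ≤ m) → yN k = 0)
    (hee : ∀ i j, 1 ≤ i → i ≤ 2 → 1 ≤ j → j ≤ 2 → br (eN i) (eN j) = 0)
    (hey : ∀ i j, 1 ≤ i → i ≤ 2 → 1 ≤ j → j ≤ m →
      br (eN i) (yN j) = if i = 1 then -yN (j + 1) else 0)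
    (hye : ∀ j i, 1 ≤ j → j ≤ m → 1 ≤ i → i ≤ 2 →
      br (yN j) (eN i) = if i = 1 then yN (j + 1) else 0)
    (hyy : ∀ j k, 1 ≤ j → j ≤ m → 1 ≤ k → k ≤ m →
      br (yN j) (yN k) = if j + k = m + 1 then ((-1 : R) ^ (k + 1)) • eN 2 else 0) :
    IsN2mBracket br m (eN 1) (eN 2) (fun k => yN (k + 1)) := by
  have e₂_left : br (eN 2) = 0 := bas.ext fun
    | .inl i => by rw [hE]; exact hee 2 _ (by omega) le_rfl (by omega) (by omega)
    | .inr j => by rw [hY, hey 2 _ (by omega) le_rfl (by omega) (by omega)]; rfl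
  have e₂_right : br.flip (eN 2) = 0 := bas.ext fun
    | .inl i => by rw [hE]; exact hee _ 2 (by omega) (by omega) (by omega) le_rfl
    | .inr j => by
      rw [hY, LinearMap.flip_apply, hye _ 2 (by omega) (by omega) (by omega) le_rfl]; rfl
  refine ⟨fun v => LinearMap.congr_fun e₂_left v, fun v => LinearMap.congr_fun e₂_right v,
    hee 1 1 le_rfl (by omega) le_rfl (by omega), fun k => ?_, fun k => ?_, fun j k => ?_⟩
  · by_cases hk : k + 1 ≤ m
    · simpa using hey 1 (k + 1) le_rfl (by omega) (by omega) hk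
    · rw [hyN0 (k + 1) (by omega), hyN0 (k + 1 + 1) (by omega), map_zero, neg_zero]
  · by_cases hk : k + 1 ≤ m
    · simpa using hye (k + 1) 1 (by omega) hk le_rfl (by omega)
    · rw [hyN0 (k + 1) (by omega), hyN0 (k + 1 + 1) (by omega), map_zero, LinearMap.zero_apply]
  · by_cases hjk : j + 1 ≤ m ∧ k + 1 ≤ m
    · rw [hyy (j + 1) (k + 1) (by omega) hjk.1 (by omega) hjk.2]
      simp only [show j + 1 + (k + 1) = m + 1 ↔ j + k + 1 = m by omega, pow_succ, mul_neg_one,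
        neg_neg]
    · rw [if_neg (by omega)]
      rcases not_and_or.mp hjk with hj | hk
      · rw [hyN0 (j + 1) (by omega), map_zero, LinearMap.zero_apply]
      · rw [hyN0 (k + 1) (by omega), map_zero]

end IsN2mBracket

theorem statement4 {V : Type*} [AddCommGroup V] [Module ℂ V]
    (m : ℕ) (hm : Odd m)
    (bas : Module.Basis (Fin 2 ⊕ Fin m) ℂ V)
    (eN yN : ℕ → V)
    (heN : ∀ k (h : 1 ≤ k ∧ k ≤ 2), eN k = bas (Sum.inl ⟨k - 1, by omega⟩))
    (hyN : ∀ k (h : 1 ≤ k ∧ k ≤ m), yN k = bas (Sum.inr ⟨k - 1, by omega⟩))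
    (hyN0 : ∀ k, ¬(1 ≤ k ∧ k ≤ m) → yN k = 0)
    (br : V →ₗ[ℂ] V →ₗ[ℂ] V)
    (hee : ∀ i j, 1 ≤ i → i ≤ 2 → 1 ≤ j → j ≤ 2 → br (eN i) (eN j) = 0)
    (hey : ∀ i j, 1 ≤ i → i ≤ 2 → 1 ≤ j → j ≤ m →
      br (eN i) (yN j) = if i = 1 then -yN (j + 1) else 0)
    (hye : ∀ j i, 1 ≤ j → j ≤ m → 1 ≤ i → i ≤ 2 →
      br (yN j) (eN i) = if i = 1 then yN (j + 1) else 0)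
    (hyy : ∀ j k, 1 ≤ j → j ≤ m → 1 ≤ k → k ≤ m →
      br (yN j) (yN k) = if j + k = m + 1 then ((-1 : ℂ) ^ (k + 1)) • eN 2 else 0)
    (G : ZMod 2 → Submodule ℂ V)
    (hG0 : G 0 = Submodule.span ℂ (Set.range fun i : Fin 2 => bas (Sum.inl i)))
    (hG1 : G 1 = Submodule.span ℂ (Set.range fun j : Fin m => bas (Sum.inr j))) :
    ∀ (α β γ : ZMod 2), ∀ x ∈ G α, ∀ y ∈ G β, ∀ z ∈ G γ,
      ((-1 : ℂ) ^ (α.val * γ.val)) • br x (br y z) +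
        ((-1 : ℂ) ^ (α.val * β.val)) • br y (br z x) +
        ((-1 : ℂ) ^ (β.val * γ.val)) • br z (br x y) = 0 := by
  have hE : ∀ i : Fin 2, bas (.inl i) = eN (i + 1) := fun i => (heN (i + 1) ⟨by omega, i.2⟩).symm
  have hY : ∀ j : Fin m, bas (.inr j) = yN (j + 1) := fun j => (hyN (j + 1) ⟨by omega, j.2⟩).symm
  have hB := IsN2mBracket.of_basis bas hE hY hyN0 hee hey hye hyy
  have hG : ∀ α, G α ≤ span ℂ (![{eN 1, eN 2}, Set.range fun k => yN (k + 1)] α) := by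
    have zero_or_one : ∀ δ : ZMod 2, δ = 0 ∨ δ = 1 := by decide
    intro α
    rcases zero_or_one α with rfl | rfl
    · rw [hG0]
      refine span_mono (Set.range_subset_iff.mpr fun i => ?_)
      fin_cases i <;> simp [hE]
    · rw [hG1]
      exact span_mono (Set.range_subset_iff.mpr fun j => ⟨j, (hY j).symm⟩)
  intro α β γ x hx y hy z hz
  exact hB.superJacobiator_eq_zero hm α β γ (hG α hx) (hG β hy) (hG γ hz)
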